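/- arXiv:2602.12374 — 2 statements merged into one kernel-verified Lean document; each statement's English description precedes it below -/
import Mathlib

section
/- A finite graph G is domination perfect if and only if every induced subgraph H of G with γ(H) = 2 satisfies i(H) = 2. -/
/-!
Let `D` be a dominating set of `G[s]` with two adjacent vertices `v`, `u`, and `R = D \ {v, u}`.
The vertices of `s` not dominated by `R`, together with `v` and `u`, induce a subgraph dominated
by `{v, u}`, so by the hypothesis (trivially, if its domination number is below two) it has an
independent dominating set `I` with at most two vertices. Then `R ∪ I` dominates `G[s]`, is no
larger than `D`, and has fewer non-isolated vertices: the vertices of `I` outside `{v, u}` see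
nothing of `R`, and `I` contains at most one of `v`, `u`. Iterating ends with an independent
dominating set, i.e. a maximal independent set, of size at most `γ(G[s])`.
-/

open SimpleGraph

/-- `D` is a dominating set: every vertex outside `D` has a neighbor in `D`. -/
def IsDominating {V : Type*} (G : SimpleGraph V) (D : Set V) : Prop :=
  ∀ v ∉ D, ∃ u ∈ D, G.Adj u v

/-- `S` is an independent set. -/
def IsIndepSet {V : Type*} (G : SimpleGraph V) (S : Set V) : Prop :=
  ∀ u ∈ S, ∀ v ∈ S, ¬ G.Adj u v

/-- `S` is a maximal independent set. -/
def IsMaxIndep {V : Type*} (G : SimpleGraph V) (S : Set V) : Prop :=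
  _root_.IsIndepSet G S ∧ ∀ T, _root_.IsIndepSet G T → S ⊆ T → T = S

/-- The domination number γ(G). -/
noncomputable def domNum {V : Type*} [Fintype V] (G : SimpleGraph V) : ℕ :=
  sInf {n | ∃ D : Finset V, IsDominating G ↑D ∧ D.card = n}

/-- The independent domination number i(G): minimum size of a maximal independent set. -/
noncomputable def indomNum {V : Type*} [Fintype V] (G : SimpleGraph V) : ℕ :=
  sInf {n | ∃ S : Finset V, IsMaxIndep G ↑S ∧ S.card = n}

/-- `G` is domination perfect: γ(H) = i(H) for every induced subgraph `H`. -/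
def DomPerfect {V : Type*} [Fintype V] (G : SimpleGraph V) : Prop :=
  ∀ s : Finset V, domNum (G.induce (↑s : Set V)) = indomNum (G.induce (↑s : Set V))

/-- `G` is minimal domination imperfect. -/
def MinImperfect {V : Type*} [Fintype V] (G : SimpleGraph V) : Prop :=
  ¬ DomPerfect G ∧ ∀ s : Finset V, s ≠ Finset.univ → DomPerfect (G.induce (↑s : Set V))

/-- The double star S_{2,2}: centers 0,1; leaves 2,3 at 0 and 4,5 at 1. -/
def doubleStar : SimpleGraph (Fin 6) :=
  SimpleGraph.fromRel (fun a b =>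
    (a = 0 ∧ b = 1) ∨ (a = 0 ∧ b = 2) ∨ (a = 0 ∧ b = 3) ∨ (a = 1 ∧ b = 4) ∨ (a = 1 ∧ b = 5))

open Finset

section Generic

variable {W : Type*} (H : SimpleGraph W)

theorem isMaxIndep_iff {S : Set W} :
    IsMaxIndep H S ↔ _root_.IsIndepSet H S ∧ IsDominating H S := by
  constructor
  · rintro ⟨hS, hmax⟩
    refine ⟨hS, fun v hv => ?_⟩
    by_contra! hfree
    have hins : _root_.IsIndepSet H (insert v S) := by
      rintro a (rfl | ha) b (rfl | hb)
      · exact H.irrefl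
      · exact fun h => hfree b hb h.symm
      · exact hfree a ha
      · exact hS a ha b hb
    exact hv (hmax _ hins (Set.subset_insert v S) ▸ Set.mem_insert v S)
  · rintro ⟨hS, hdom⟩
    refine ⟨hS, fun T hT hST => Set.Subset.antisymm (fun x hx => ?_) hST⟩
    by_contra hxS
    obtain ⟨u, hu, hux⟩ := hdom x hxS
    exact hT u (hST hu) x hx hux

theorem exists_isMaxIndep [Finite W] : ∃ S : Finset W, IsMaxIndep H ↑S := by
  obtain ⟨S, hS, hmax⟩ := (Set.toFinite {S : Set W | _root_.IsIndepSet H S}).exists_maximal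
    ⟨∅, fun _ h => h.elim⟩
  exact ⟨(Set.toFinite S).toFinset, by
    rw [Set.Finite.coe_toFinset]
    exact ⟨hS, fun T hT hST => (hmax hT hST).antisymm hST⟩⟩

variable [Fintype W]

theorem domNum_le {D : Finset W} (hD : IsDominating H ↑D) : domNum H ≤ D.card :=
  Nat.sInf_le ⟨D, hD, rfl⟩

theorem exists_isDominating_card_eq_domNum :
    ∃ D : Finset W, IsDominating H ↑D ∧ D.card = domNum H :=
  Nat.sInf_mem (s := {n | ∃ D : Finset W, IsDominating H ↑D ∧ D.card = n})
    ⟨_, univ, fun v hv => (hv (mem_coe.2 (mem_univ v))).elim, rfl⟩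

theorem indomNum_le {S : Finset W} (hS : IsMaxIndep H ↑S) : indomNum H ≤ S.card :=
  Nat.sInf_le ⟨S, hS, rfl⟩

theorem exists_isMaxIndep_card_eq_indomNum :
    ∃ S : Finset W, IsMaxIndep H ↑S ∧ S.card = indomNum H :=
  let ⟨S, hS⟩ := exists_isMaxIndep H
  Nat.sInf_mem (s := {n | ∃ S : Finset W, IsMaxIndep H ↑S ∧ S.card = n}) ⟨_, S, hS, rfl⟩

theorem domNum_le_indomNum : domNum H ≤ indomNum H := by
  obtain ⟨S, hS, hcard⟩ := exists_isMaxIndep_card_eq_indomNum H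
  exact hcard ▸ domNum_le H ((isMaxIndep_iff H).1 hS).2

end Generic

section Induce

variable {V : Type*} (G : SimpleGraph V)

def DominatesIn (s D : Finset V) : Prop :=
  D ⊆ s ∧ ∀ v ∈ s, v ∈ D ∨ ∃ u ∈ D, G.Adj u v

variable {G} {s : Finset V}

theorem isDominating_induce_iff (D : Finset (s : Set V)) :
    IsDominating (G.induce s) ↑D ↔ DominatesIn G s (D.map (Function.Embedding.subtype _)) := by
  simp only [IsDominating, DominatesIn, SetLike.coe_sort_coe, SetLike.mem_coe, comap_adj,
    Function.Embedding.subtype_apply, Subtype.exists, exists_and_right, Subtype.forall,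
    subset_iff, mem_map, exists_eq_right, forall_exists_index, or_iff_not_imp_left, not_exists]
  exact ⟨fun h => ⟨fun _ hx _ => hx, fun v hv hvD => h v hv (hvD hv)⟩,
    fun h v hv hvD => h.2 v hv fun _ => hvD⟩

theorem isIndepSet_induce_iff (D : Finset (s : Set V)) :
    _root_.IsIndepSet (G.induce s) ↑D ↔
      _root_.IsIndepSet G ↑(D.map (Function.Embedding.subtype _)) := by
  simp [_root_.IsIndepSet]

theorem domNum_induce_le {D : Finset V} (hD : DominatesIn G s D) :
    domNum (G.induce s) ≤ D.card := by
  classical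
  have hD' := subtype_map_of_mem (p := (· ∈ (s : Set V))) hD.1
  rw [← hD'] at hD ⊢
  rw [card_map]
  exact domNum_le _ ((isDominating_induce_iff _).2 hD)

theorem exists_dominatesIn_card_eq_domNum (G : SimpleGraph V) (s : Finset V) :
    ∃ D, DominatesIn G s D ∧ D.card = domNum (G.induce s) := by
  obtain ⟨D, hD, hcard⟩ := exists_isDominating_card_eq_domNum (G.induce s)
  exact ⟨_, (isDominating_induce_iff D).1 hD, (card_map _).trans hcard⟩

theorem indomNum_induce_le {I : Finset V} (hI : _root_.IsIndepSet G ↑I)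
    (hIs : DominatesIn G s I) : indomNum (G.induce s) ≤ I.card := by
  classical
  have hI' := subtype_map_of_mem (p := (· ∈ (s : Set V))) hIs.1
  rw [← hI'] at hI hIs ⊢
  rw [card_map]
  exact indomNum_le _
    ((isMaxIndep_iff _).2 ⟨(isIndepSet_induce_iff _).2 hI, (isDominating_induce_iff _).2 hIs⟩)

theorem exists_isIndepSet_dominatesIn_card_eq_indomNum (G : SimpleGraph V) (s : Finset V) :
    ∃ I : Finset V, _root_.IsIndepSet G ↑I ∧ DominatesIn G s I ∧
      I.card = indomNum (G.induce s) := by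
  obtain ⟨I, hI, hcard⟩ := exists_isMaxIndep_card_eq_indomNum (G.induce s)
  rw [isMaxIndep_iff] at hI
  exact ⟨_, (isIndepSet_induce_iff I).1 hI.1, (isDominating_induce_iff I).1 hI.2,
    (card_map _).trans hcard⟩

theorem exists_isIndepSet_dominatesIn_card_le_two
    (hyp : ∀ s : Finset V, domNum (G.induce (↑s : Set V)) = 2 →
      indomNum (G.induce (↑s : Set V)) = 2)
    {t D : Finset V} (hD : DominatesIn G t D) (hcard : D.card ≤ 2) :
    ∃ I : Finset V, _root_.IsIndepSet G ↑I ∧ DominatesIn G t I ∧ I.card ≤ 2 := by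
  obtain ⟨D₀, hD₀, hD₀card⟩ := exists_dominatesIn_card_eq_domNum G t
  rcases ((domNum_induce_le hD).trans hcard).lt_or_eq with hlt | heq
  · refine ⟨D₀, fun a ha b hb => ?_, hD₀, by omega⟩
    rw [card_le_one.1 (by omega) a ha b hb]
    exact G.irrefl
  · obtain ⟨I, hI, hIt, hIcard⟩ := exists_isIndepSet_dominatesIn_card_eq_indomNum G t
    exact ⟨I, hI, hIt, (hIcard.trans (hyp t heq)).le⟩

end Induce

section Exchange

variable {V : Type*} {G : SimpleGraph V} [DecidableEq V]

theorem card_inter_pair_le_one {I : Finset V} (hI : _root_.IsIndepSet G ↑I) {v u : V}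
    (hvu : G.Adj v u) : (I ∩ {v, u}).card ≤ 1 := by
  have hvu_notMem : v ∉ I ∨ u ∉ I := by
    by_contra! h
    exact hI v h.1 u h.2 hvu
  rcases hvu_notMem with h | h
  · rw [inter_insert_of_notMem h]
    exact (card_le_card inter_subset_right).trans (card_singleton u).le
  · rw [pair_comm, inter_insert_of_notMem h]
    exact (card_le_card inter_subset_right).trans (card_singleton v).le

variable (G) [DecidableRel G.Adj]

def nonIsolated (D : Finset V) : Finset V :=
  {x ∈ D | ∃ y ∈ D, G.Adj x y}

def notDominatedBy (R s : Finset V) : Finset V :=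
  {w ∈ s | w ∉ R ∧ ∀ x ∈ R, ¬ G.Adj x w}

variable {G}

theorem nonIsolated_union_subset {R I P : Finset V} (hRP : Disjoint R P)
    (hI : _root_.IsIndepSet G ↑I) (hfree : ∀ x ∈ I \ P, x ∉ R ∧ ∀ y ∈ R, ¬ G.Adj y x) :
    nonIsolated G (R ∪ I) ⊆ (nonIsolated G (R ∪ P) \ P) ∪ (I ∩ P) := by
  intro x hx
  simp only [nonIsolated, mem_filter, mem_union, mem_sdiff, mem_inter] at hx ⊢
  obtain ⟨hxRI, y, hy, hxy⟩ := hx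
  by_cases hxP : x ∈ P
  · rcases hxRI with hxR | hxI
    · exact absurd hxP (disjoint_left.1 hRP hxR)
    · exact Or.inr ⟨hxI, hxP⟩
  rcases hxRI with hxR | hxI
  · refine Or.inl ⟨⟨Or.inl hxR, y, ?_, hxy⟩, hxP⟩
    rcases hy with hyR | hyI
    · exact Or.inl hyR
    by_cases hyP : y ∈ P
    · exact Or.inr hyP
    · exact absurd hxy ((hfree y (mem_sdiff.2 ⟨hyI, hyP⟩)).2 x hxR)
  · rcases hy with hyR | hyI
    · exact absurd hxy.symm ((hfree x (mem_sdiff.2 ⟨hxI, hxP⟩)).2 y hyR)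
    · exact absurd hxy (hI x hxI y hyI)

theorem DominatesIn.union_notDominatedBy {R P s : Finset V} (hD : DominatesIn G s (R ∪ P)) :
    DominatesIn G (P ∪ notDominatedBy G R s) P := by
  refine ⟨subset_union_left, fun w hw => ?_⟩
  rcases mem_union.1 hw with hwP | hw
  · exact Or.inl hwP
  obtain ⟨hws, hwR, hwR'⟩ := mem_filter.1 hw
  rcases hD.2 w hws with hwD | ⟨x, hxD, hxw⟩
  · exact Or.inl ((mem_union.1 hwD).resolve_left hwR)
  · exact Or.inr ⟨x, (mem_union.1 hxD).resolve_left fun hxR => hwR' x hxR hxw, hxw⟩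

theorem DominatesIn.union_of_notDominatedBy {R P I s : Finset V} (hR : R ⊆ s) (hP : P ⊆ s)
    (hI : DominatesIn G (P ∪ notDominatedBy G R s) I) : DominatesIn G s (R ∪ I) := by
  refine ⟨union_subset hR (hI.1.trans (union_subset hP (filter_subset _ _))), fun w hw => ?_⟩
  by_cases hwR : w ∉ R ∧ ∀ x ∈ R, ¬ G.Adj x w
  · rcases hI.2 w (mem_union_right _ (mem_filter.2 ⟨hw, hwR⟩)) with hwI | ⟨x, hxI, hxw⟩
    · exact Or.inl (mem_union_right _ hwI)
    · exact Or.inr ⟨x, mem_union_right _ hxI, hxw⟩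
  · simp only [not_and_or, not_not, not_forall] at hwR
    rcases hwR with hwR | ⟨x, hxR, hxw⟩
    · exact Or.inl (mem_union_left _ hwR)
    · exact Or.inr ⟨x, mem_union_left _ hxR, hxw⟩

theorem exists_dominatesIn_nonIsolated_lt
    (hpair : ∀ t D : Finset V, DominatesIn G t D → D.card ≤ 2 →
      ∃ I : Finset V, _root_.IsIndepSet G ↑I ∧ DominatesIn G t I ∧ I.card ≤ 2)
    {s D : Finset V} (hD : DominatesIn G s D) {v u : V} (hv : v ∈ D) (hu : u ∈ D)
    (hvu : G.Adj v u) :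
    ∃ D', DominatesIn G s D' ∧ D'.card ≤ D.card ∧
      (nonIsolated G D').card < (nonIsolated G D).card := by
  set P : Finset V := {v, u}
  have hPD : P ⊆ D := insert_subset hv (singleton_subset_iff.2 hu)
  have hP : P.card = 2 := card_pair hvu.ne
  set R := D \ P
  have hRP : R ∪ P = D := sdiff_union_of_subset hPD
  obtain ⟨I, hI, hIt, hIcard⟩ :=
    hpair _ P (DominatesIn.union_notDominatedBy (hRP ▸ hD)) hP.le
  have hfree : ∀ x ∈ I \ P, x ∉ R ∧ ∀ y ∈ R, ¬ G.Adj y x := by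
    intro x hx
    obtain ⟨hxI, hxP⟩ := mem_sdiff.1 hx
    exact (by simpa [notDominatedBy, hxP] using hIt.1 hxI : x ∈ s ∧ _).2
  refine ⟨R ∪ I, hIt.union_of_notDominatedBy (sdiff_subset.trans hD.1) (hPD.trans hD.1), ?_, ?_⟩
  · have hR : R.card = D.card - 2 := hP ▸ card_sdiff_of_subset hPD
    have := card_union_le R I
    have := card_le_card hPD
    omega
  · have hPN : P ⊆ nonIsolated G D := insert_subset (mem_filter.2 ⟨hv, u, hu, hvu⟩)
      (singleton_subset_iff.2 (mem_filter.2 ⟨hu, v, hv, hvu.symm⟩))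
    have hsub : (nonIsolated G (R ∪ I)).card ≤ (nonIsolated G D \ P ∪ I ∩ P).card := by
      have := card_le_card (nonIsolated_union_subset sdiff_disjoint hI hfree)
      rwa [hRP] at this
    have hN : (nonIsolated G D \ P).card = (nonIsolated G D).card - 2 :=
      hP ▸ card_sdiff_of_subset hPN
    have := card_union_le (nonIsolated G D \ P) (I ∩ P)
    have := card_le_card hPN
    have : (I ∩ P).card ≤ 1 := card_inter_pair_le_one hI hvu
    omega

theorem exists_isIndepSet_dominatesIn_card_le
    (hpair : ∀ t D : Finset V, DominatesIn G t D → D.card ≤ 2 →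
      ∃ I : Finset V, _root_.IsIndepSet G ↑I ∧ DominatesIn G t I ∧ I.card ≤ 2)
    {s D : Finset V} (hD : DominatesIn G s D) :
    ∃ I : Finset V, _root_.IsIndepSet G ↑I ∧ DominatesIn G s I ∧ I.card ≤ D.card := by
  induction hn : (nonIsolated G D).card using Nat.strong_induction_on generalizing D with
  | _ n ih =>
  by_cases hind : _root_.IsIndepSet G ↑D
  · exact ⟨D, hind, hD, le_rfl⟩
  simp only [_root_.IsIndepSet, not_forall, not_not] at hind
  obtain ⟨v, hv, u, hu, hvu⟩ := hind
  obtain ⟨D', hD', hcard, hlt⟩ := exists_dominatesIn_nonIsolated_lt hpair hD hv hu hvu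
  obtain ⟨I, hI, hIs, hIcard⟩ := ih _ (hn ▸ hlt) hD' rfl
  exact ⟨I, hI, hIs, hIcard.trans hcard⟩

end Exchange

theorem stmt3 {V : Type*} [Fintype V] (G : SimpleGraph V) :
    DomPerfect G ↔
      ∀ s : Finset V, domNum (G.induce (↑s : Set V)) = 2 →
        indomNum (G.induce (↑s : Set V)) = 2 := by
  classical
  refine ⟨fun h s hs => h s ▸ hs, fun hyp s => (domNum_le_indomNum _).antisymm ?_⟩
  obtain ⟨D, hD, hDcard⟩ := exists_dominatesIn_card_eq_domNum G s
  obtain ⟨I, hI, hIs, hIcard⟩ := exists_isIndepSet_dominatesIn_card_le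
    (fun _ _ => exists_isIndepSet_dominatesIn_card_le_two hyp) hD
  calc indomNum (G.induce (↑s : Set V)) ≤ I.card := indomNum_induce_le hI hIs
    _ ≤ D.card := hIcard
    _ = domNum (G.induce (↑s : Set V)) := hDcard
end

section
/- Let F be a minimal domination imperfect graph with minimum dominating set {u,v} (u adjacent to v) and partition V(F) = A ∪ B ∪ C ∪ {u,v} as in Lemma 1. If a ∈ A and c ∈ B are nonadjacent, then {a, c} dominates the subgraph induced by A ∪ B, provided F contains none of the graphs G_1, G_2, G_3 (double star S_{2,2}, and the two graphs obtained from S_{2,2} by adding one or two edges between leaves on opposite sides so that γ = 2 < i = 3 is preserved) as induced subgraphs. -/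
/-!
Since `F` is minimal domination imperfect, `γ(F) = 2 ≠ i(F)`; as every maximal independent set
dominates, no independent pair is maximal, i.e. any two non-adjacent vertices have a common
non-neighbour. If some `x ∈ A` were dominated by neither `a` nor `c`, take a common non-neighbour
`b` of `u` and `c`; it is dominated by `{u, v}`, hence adjacent to `v`. Then `u, v, a, x, b, c`
induce a double star with centres `u, v`, leaves `a, x` and `b, c`, and extra edges among
`ab, xb` only: a copy of `G₁`, `G₂` or `G₃`. The case `x ∈ B` is symmetric.
-/

open SimpleGraph

/-- G₂ : the double star plus the edge between leaf 2 (at 0) and leaf 4 (at 1). -/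
def graphG2 : SimpleGraph (Fin 6) :=
  SimpleGraph.fromRel (fun a b =>
    (a = 0 ∧ b = 1) ∨ (a = 0 ∧ b = 2) ∨ (a = 0 ∧ b = 3) ∨ (a = 1 ∧ b = 4) ∨ (a = 1 ∧ b = 5) ∨
    (a = 2 ∧ b = 4))

/-- G₃ : the double star plus two cross edges forming a path 2–4–3 among the leaves. -/
def graphG3 : SimpleGraph (Fin 6) :=
  SimpleGraph.fromRel (fun a b =>
    (a = 0 ∧ b = 1) ∨ (a = 0 ∧ b = 2) ∨ (a = 0 ∧ b = 3) ∨ (a = 1 ∧ b = 4) ∨ (a = 1 ∧ b = 5) ∨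
    (a = 2 ∧ b = 4) ∨ (a = 3 ∧ b = 4))

section Invariance

variable {V W : Type*} {G : SimpleGraph V} {H : SimpleGraph W}

lemma IsDominating.image_iso (e : G ≃g H) {D : Set V} (h : IsDominating G D) :
    IsDominating H (e '' D) := by
  intro w hw
  obtain ⟨x, hx, hadj⟩ := h (e.symm w) fun hx => hw ⟨e.symm w, hx, e.apply_symm_apply w⟩
  exact ⟨e x, ⟨x, hx, rfl⟩, by simpa using e.map_adj_iff.mpr hadj⟩

lemma IsIndepSet.image_iso (e : G ≃g H) {S : Set V} (h : _root_.IsIndepSet G S) :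
    _root_.IsIndepSet H (e '' S) := by
  rintro _ ⟨x, hx, rfl⟩ _ ⟨y, hy, rfl⟩ hadj
  exact h x hx y hy (e.map_adj_iff.mp hadj)

lemma IsMaxIndep.image_iso (e : G ≃g H) {S : Set V} (h : IsMaxIndep G S) :
    IsMaxIndep H (e '' S) := by
  refine ⟨h.1.image_iso e, fun T hT hST => ?_⟩
  have hTeq : T = e '' (e.symm '' T) := by simp [Set.image_image]
  have hST' : S ⊆ e.symm '' T := fun x hx => ⟨e x, hST ⟨x, hx, rfl⟩, e.symm_apply_apply x⟩
  rw [hTeq, h.2 _ (hT.image_iso e.symm) hST']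

lemma SimpleGraph.Iso.domNum_eq [Fintype V] [Fintype W] (e : G ≃g H) :
    domNum G = domNum H := by
  unfold domNum
  congr 1
  ext n
  constructor <;> rintro ⟨D, hD, rfl⟩
  · exact ⟨D.map e.toEquiv.toEmbedding, by simpa using hD.image_iso e, D.card_map _⟩
  · exact ⟨D.map e.symm.toEquiv.toEmbedding, by simpa using hD.image_iso e.symm, D.card_map _⟩

lemma SimpleGraph.Iso.indomNum_eq [Fintype V] [Fintype W] (e : G ≃g H) :
    indomNum G = indomNum H := by
  unfold indomNum
  congr 1
  ext n
  constructor <;> rintro ⟨S, hS, rfl⟩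
  · exact ⟨S.map e.toEquiv.toEmbedding, by simpa using hS.image_iso e, S.card_map _⟩
  · exact ⟨S.map e.symm.toEquiv.toEmbedding, by simpa using hS.image_iso e.symm, S.card_map _⟩

end Invariance

section Perfect

variable {V : Type*} [Fintype V] {G : SimpleGraph V}

def SimpleGraph.induceFinsetUnivIso (G : SimpleGraph V) :
    G.induce (↑(Finset.univ : Finset V) : Set V) ≃g G where
  toEquiv := Equiv.subtypeUnivEquiv fun x => Finset.mem_coe.mpr (Finset.mem_univ x)
  map_rel_iff' := Iff.rfl

lemma DomPerfect.domNum_eq_indomNum (h : DomPerfect G) : domNum G = indomNum G := by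
  simpa [G.induceFinsetUnivIso.domNum_eq, G.induceFinsetUnivIso.indomNum_eq] using h Finset.univ

lemma MinImperfect.domNum_ne_indomNum (h : MinImperfect G) : domNum G ≠ indomNum G := by
  intro hG
  refine h.1 fun s => ?_
  by_cases hs : s = Finset.univ
  · subst hs
    rwa [G.induceFinsetUnivIso.domNum_eq, G.induceFinsetUnivIso.indomNum_eq]
  · exact (h.2 s hs).domNum_eq_indomNum

end Perfect

section MaxIndep

variable {V : Type*} {G : SimpleGraph V}

lemma IsMaxIndep.isDominating {S : Set V} (h : IsMaxIndep G S) : IsDominating G S := by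
  intro w hw
  by_contra! hno
  have hind : _root_.IsIndepSet G (insert w S) := by
    rintro p (rfl | hp) q (rfl | hq) hadj
    · exact G.irrefl hadj
    · exact hno q hq hadj.symm
    · exact hno p hp hadj
    · exact h.1 p hp q hq hadj
  exact hw (h.2 _ hind (Set.subset_insert w S) ▸ Set.mem_insert w S)

lemma isMaxIndep_pair {p q : V} (hpq : ¬G.Adj p q)
    (h : ∀ w, w ≠ p → w ≠ q → ¬G.Adj p w → G.Adj q w) : IsMaxIndep G {p, q} := by
  refine ⟨?_, fun T hT hpqT => Set.Subset.antisymm (fun w hw => ?_) hpqT⟩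
  · rintro x (rfl | rfl) y (rfl | rfl) hadj
    exacts [G.irrefl hadj, hpq hadj, hpq hadj.symm, G.irrefl hadj]
  · by_contra! hwpq
    simp only [Set.mem_insert_iff, Set.mem_singleton_iff, not_or] at hwpq
    have hpw := hT p (hpqT (Set.mem_insert p _)) w hw
    exact hT q (hpqT (Set.mem_insert_of_mem p rfl)) w hw (h w hwpq.1 hwpq.2 hpw)

variable [Fintype V]

-- Without `h`, `indomNum G` would be the junk value `sInf ∅ = 0`.
lemma domNum_le_indomNum_s14 (h : ∃ S : Finset V, IsMaxIndep G S) : domNum G ≤ indomNum G := by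
  obtain ⟨S₀, hS₀⟩ := h
  obtain ⟨S, hS, hcard⟩ := Nat.sInf_mem (s := {n | ∃ S : Finset V, IsMaxIndep G S ∧ S.card = n})
    ⟨_, S₀, hS₀, rfl⟩
  have hdom : domNum G ≤ S.card := Nat.sInf_le ⟨S, hS.isDominating, rfl⟩
  exact hdom.trans_eq hcard

lemma exists_common_nonadj_of_domNum_ne_indomNum (hγ : domNum G = 2)
    (hne : domNum G ≠ indomNum G) {p q : V} (hpq : p ≠ q) (hadj : ¬G.Adj p q) :
    ∃ w, w ≠ p ∧ w ≠ q ∧ ¬G.Adj p w ∧ ¬G.Adj q w := by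
  classical
  by_contra! h
  have hmax : IsMaxIndep G ({p, q} : Finset V) := by
    simpa using isMaxIndep_pair hadj h
  have hle : indomNum G ≤ 2 := Nat.sInf_le ⟨{p, q}, hmax, Finset.card_pair hpq⟩
  have hge := domNum_le_indomNum_s14 ⟨_, hmax⟩
  omega

end MaxIndep

def doubleStarPlus (s t : Prop) : SimpleGraph (Fin 6) :=
  SimpleGraph.fromRel fun i j =>
    (i = 0 ∧ j = 1) ∨ (i = 0 ∧ j = 2) ∨ (i = 0 ∧ j = 3) ∨ (i = 1 ∧ j = 4) ∨ (i = 1 ∧ j = 5) ∨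
    (s ∧ i = 2 ∧ j = 4) ∨ (t ∧ i = 3 ∧ j = 4)

lemma doubleStarPlus_false_false : doubleStarPlus False False = doubleStar := by
  simp [doubleStarPlus, doubleStar]

lemma doubleStarPlus_true_false : doubleStarPlus True False = graphG2 := by
  simp [doubleStarPlus, graphG2]

lemma doubleStarPlus_true_true : doubleStarPlus True True = graphG3 := by
  simp [doubleStarPlus, graphG3]

lemma nonempty_doubleStarPlus_embedding {V : Type*} {F : SimpleGraph V} {u v a x b c : V}
    (hne_ax : a ≠ x) (hne_bc : b ≠ c) (hne_bu : b ≠ u)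
    (huv : F.Adj u v) (hua : F.Adj u a) (hux : F.Adj u x) (hvb : F.Adj v b) (hvc : F.Adj v c)
    (hva : ¬F.Adj v a) (hvx : ¬F.Adj v x) (hub : ¬F.Adj u b) (huc : ¬F.Adj u c)
    (hax : ¬F.Adj a x) (hac : ¬F.Adj a c) (hxc : ¬F.Adj x c) (hbc : ¬F.Adj b c) :
    Nonempty (doubleStarPlus (F.Adj a b) (F.Adj x b) ↪g F) := by
  have hne_uv := huv.ne; have hne_ua := hua.ne; have hne_ux := hux.ne
  have hne_vb := hvb.ne; have hne_vc := hvc.ne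
  have hne_cu : c ≠ u := by rintro rfl; exact hac hua.symm
  have hne_av : a ≠ v := by rintro rfl; exact hac hvc
  have hne_xv : x ≠ v := by rintro rfl; exact hxc hvc
  have hne_ab : a ≠ b := by rintro rfl; exact hub hua
  have hne_ac : a ≠ c := by rintro rfl; exact huc hua
  have hne_xb : x ≠ b := by rintro rfl; exact hub hux
  have hne_xc : x ≠ c := by rintro rfl; exact huc hux
  refine ⟨{ toFun := ![u, v, a, x, b, c], inj' := fun i j h => ?_, map_rel_iff' := fun {i j} => ?_ }⟩
  · fin_cases i <;> fin_cases j <;>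
      first | rfl | exact absurd h ‹_› | exact absurd h.symm ‹_›
  · change F.Adj (![u, v, a, x, b, c] i) (![u, v, a, x, b, c] j) ↔ _
    fin_cases i <;> fin_cases j <;> simp [doubleStarPlus] <;>
      first | assumption | exact F.adj_comm _ _ | rwa [F.adj_comm]

lemma nonempty_embedding_doubleStar_or_graphG2_or_graphG3 {V : Type*} {F : SimpleGraph V}
    {u v a x b c : V}
    (hne_ax : a ≠ x) (hne_bc : b ≠ c) (hne_bu : b ≠ u)
    (huv : F.Adj u v) (hua : F.Adj u a) (hux : F.Adj u x) (hvb : F.Adj v b) (hvc : F.Adj v c)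
    (hva : ¬F.Adj v a) (hvx : ¬F.Adj v x) (hub : ¬F.Adj u b) (huc : ¬F.Adj u c)
    (hax : ¬F.Adj a x) (hac : ¬F.Adj a c) (hxc : ¬F.Adj x c) (hbc : ¬F.Adj b c) :
    Nonempty (doubleStar ↪g F) ∨ Nonempty (graphG2 ↪g F) ∨ Nonempty (graphG3 ↪g F) := by
  have haxb := nonempty_doubleStarPlus_embedding hne_ax hne_bc hne_bu huv hua hux hvb hvc hva hvx
    hub huc hax hac hxc hbc
  have hxab := nonempty_doubleStarPlus_embedding hne_ax.symm hne_bc hne_bu huv hux hua hvb hvc hvx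
    hva hub huc (fun h => hax h.symm) hxc hac hbc
  by_cases hab : F.Adj a b <;> by_cases hxb : F.Adj x b
  · simp only [hab, hxb, doubleStarPlus_true_true] at haxb
    exact Or.inr (Or.inr haxb)
  · simp only [hab, hxb, doubleStarPlus_true_false] at haxb
    exact Or.inr (Or.inl haxb)
  · simp only [hab, hxb, doubleStarPlus_true_false] at hxab
    exact Or.inr (Or.inl hxab)
  · simp only [hab, hxb, doubleStarPlus_false_false] at haxb
    exact Or.inl haxb

section Configuration

variable {V : Type*} {F : SimpleGraph V} {u v : V}

lemma adj_and_not_adj_of_mem_private (huv : u ≠ v) {x : V}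
    (hx : x ∈ {x | x ∉ ({u, v} : Set V) ∧ ({u, v} : Set V) ∩ {w | F.Adj w x} = {u}}) :
    F.Adj u x ∧ ¬F.Adj v x := by
  have hN := hx.2
  refine ⟨(hN ▸ Set.mem_singleton u : u ∈ ({u, v} : Set V) ∩ {w | F.Adj w x}).2, fun hvx => ?_⟩
  have hv : v ∈ ({u} : Set V) := hN ▸ ⟨Set.mem_insert_of_mem u rfl, hvx⟩
  exact huv hv.symm

lemma eq_or_adj_or_adj_of_private [Fintype V] (hD : IsDominating F {u, v})
    (hγ : domNum F = 2) (hne : domNum F ≠ indomNum F)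
    (hfree1 : IsEmpty (doubleStar ↪g F)) (hfree2 : IsEmpty (graphG2 ↪g F))
    (hfree3 : IsEmpty (graphG3 ↪g F)) {a x c : V}
    (huv : F.Adj u v) (hua : F.Adj u a) (hva : ¬F.Adj v a) (hux : F.Adj u x) (hvx : ¬F.Adj v x)
    (hvc : F.Adj v c) (huc : ¬F.Adj u c) (hac : ¬F.Adj a c) :
    x = a ∨ F.Adj a x ∨ F.Adj c x := by
  by_contra! h
  obtain ⟨hxa, hax, hcx⟩ := h
  have hcu : c ≠ u := by rintro rfl; exact hac hua.symm
  obtain ⟨b, hbu, hbc, hub, hcb⟩ :=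
    exists_common_nonadj_of_domNum_ne_indomNum hγ hne hcu.symm huc
  have hvb : F.Adj v b := by
    obtain ⟨w, hw, hwb⟩ := hD b (by rintro (rfl | rfl); exacts [hbu rfl, hcb hvc.symm])
    rcases hw with rfl | rfl
    exacts [absurd hwb hub, hwb]
  rcases nonempty_embedding_doubleStar_or_graphG2_or_graphG3 (Ne.symm hxa) hbc hbu huv hua hux
    hvb hvc hva hvx hub huc hax hac (fun h => hcx h.symm) (fun h => hcb h.symm)
    with h | h | h
  exacts [h.elim hfree1.false, h.elim hfree2.false, h.elim hfree3.false]

end Configuration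

theorem stmt14 {V : Type*} [Fintype V] (F : SimpleGraph V)
    (hmin : MinImperfect F)
    (u v : V) (huv : F.Adj u v)
    (hD : IsDominating F {u, v}) (hγ : domNum F = 2)
    (A B : Set V)
    (hA : A = {x | x ∉ ({u, v} : Set V) ∧ ({u, v} : Set V) ∩ {w | F.Adj w x} = {u}})
    (hB : B = {x | x ∉ ({u, v} : Set V) ∧ ({u, v} : Set V) ∩ {w | F.Adj w x} = {v}})
    (hfree1 : IsEmpty (doubleStar ↪g F))
    (hfree2 : IsEmpty (graphG2 ↪g F))
    (hfree3 : IsEmpty (graphG3 ↪g F))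
    (a c : V) (ha : a ∈ A) (hc : c ∈ B) (hac : ¬ F.Adj a c) :
    ∀ x ∈ A ∪ B, x = a ∨ x = c ∨ F.Adj a x ∨ F.Adj c x := by
  have hne := hmin.domNum_ne_indomNum
  rw [Set.pair_comm u v] at hB
  obtain ⟨hua, hva⟩ := adj_and_not_adj_of_mem_private huv.ne (hA ▸ ha)
  obtain ⟨hvc, huc⟩ := adj_and_not_adj_of_mem_private huv.ne.symm (hB ▸ hc)
  rintro x (hx | hx)
  · obtain ⟨hux, hvx⟩ := adj_and_not_adj_of_mem_private huv.ne (hA ▸ hx)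
    have := eq_or_adj_or_adj_of_private hD hγ hne hfree1 hfree2 hfree3 huv hua hva hux hvx hvc
      huc hac
    tauto
  · obtain ⟨hvx, hux⟩ := adj_and_not_adj_of_mem_private huv.ne.symm (hB ▸ hx)
    have := eq_or_adj_or_adj_of_private (Set.pair_comm u v ▸ hD) hγ hne hfree1 hfree2 hfree3
      huv.symm hvc huc hvx hux hua hva (fun h => hac h.symm)
    tauto
end
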